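/- arXiv:1702.00661 — 5 statements merged into one kernel-verified Lean document; each statement's English description precedes it below -/
import Mathlib

section
/- For a nonempty bounded open convex set Ω ⊆ ℝⁿ and points p, q ∈ Ω, define m(p,q) = inf{λ > 0 : Ω - q ⊆ λ(Ω - p)}. Then the infimum is attained, i.e. Ω - q ⊆ m(p,q)(Ω - p). -/
open Set Pointwise

lemma smul_subset_smul_of_le' {E : Type*} [AddCommGroup E] [Module ℝ E]
    {A : Set E} (hA : Convex ℝ A) (h0 : (0:E) ∈ A) {s t : ℝ}
    (hs : 0 < s) (hst : s ≤ t) : s • A ⊆ t • A := by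
  rintro x ⟨a, ha, rfl⟩
  have ht : 0 < t := hs.trans_le hst
  refine ⟨(s / t) • a, ?_, ?_⟩
  · exact hA.smul_mem_of_zero_mem h0 ha ⟨by positivity, div_le_one_of_le₀ hst ht.le⟩
  · simp only []; rw [smul_smul, mul_div_cancel₀ _ ht.ne']

noncomputable def mGauge {n : ℕ} (Ω : Set (EuclideanSpace ℝ (Fin n)))
    (p q : EuclideanSpace ℝ (Fin n)) : ℝ :=
  sInf {l : ℝ | 0 < l ∧ (fun x => x - q) '' Ω ⊆ l • ((fun x => x - p) '' Ω)}

theorem stmt_2 {n : ℕ} (Ω : Set (EuclideanSpace ℝ (Fin n)))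
    (hne : Ω.Nonempty) (hb : Bornology.IsBounded Ω) (ho : IsOpen Ω)
    (hc : Convex ℝ Ω) (p q : EuclideanSpace ℝ (Fin n)) (hp : p ∈ Ω) (hq : q ∈ Ω) :
    (fun x => x - q) '' Ω ⊆ mGauge Ω p q • ((fun x => x - p) '' Ω) := by
  set A := (fun x : EuclideanSpace ℝ (Fin n) => x - p) '' Ω with hAdef
  set B := (fun x : EuclideanSpace ℝ (Fin n) => x - q) '' Ω with hBdef
  set S := {l : ℝ | 0 < l ∧ B ⊆ l • A} with hSdef
  have h0A : (0 : EuclideanSpace ℝ (Fin n)) ∈ A := ⟨p, hp, sub_self p⟩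
  have h0B : (0 : EuclideanSpace ℝ (Fin n)) ∈ B := ⟨q, hq, sub_self q⟩
  have hAopen : IsOpen A := by
    have : A = (Homeomorph.subRight p) '' Ω := rfl
    rw [this, Homeomorph.isOpen_image]; exact ho
  have hBopen : IsOpen B := by
    have : B = (Homeomorph.subRight q) '' Ω := rfl
    rw [this, Homeomorph.isOpen_image]; exact ho
  have hAconv : Convex ℝ A := by
    have : A = (fun x : EuclideanSpace ℝ (Fin n) => -p + x) '' Ω := by
      simp [hAdef, sub_eq_neg_add]
    rw [this]; exact hc.translate (-p)
  -- A inside a ball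
  obtain ⟨R, hR0, hRsub⟩ := hb.subset_ball_lt 0 p
  have hAball : A ⊆ Metric.ball 0 R := by
    rintro x ⟨a, ha, rfl⟩
    have := hRsub ha
    simpa [Metric.mem_ball, dist_eq_norm] using this
  -- B inside a ball
  obtain ⟨R', hR'0, hR'sub⟩ := hb.subset_ball_lt 0 q
  have hBball : B ⊆ Metric.ball 0 R' := by
    rintro x ⟨a, ha, rfl⟩
    have := hR'sub ha
    simpa [Metric.mem_ball, dist_eq_norm] using this
  -- A contains a ball around 0
  obtain ⟨ε, hε0, hεsub⟩ := Metric.isOpen_iff.1 hAopen 0 h0A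
  -- S is nonempty
  have hSne : S.Nonempty := by
    refine ⟨R' / ε, by positivity, ?_⟩
    intro x hx
    refine ⟨(R' / ε)⁻¹ • x, hεsub ?_, ?_⟩
    · have hxn : ‖x‖ < R' := by simpa [Metric.mem_ball, dist_eq_norm] using hBball hx
      have : ‖(R' / ε)⁻¹ • x‖ = (R' / ε)⁻¹ * ‖x‖ := by
        rw [norm_smul, Real.norm_eq_abs, abs_of_pos (by positivity)]
      simp only [Metric.mem_ball, dist_zero_right, this]
      rw [inv_mul_lt_iff₀ (by positivity), div_mul_eq_mul_div, lt_div_iff₀ hε0]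
      calc ‖x‖ * ε < R' * ε := by exact mul_lt_mul_of_pos_right hxn hε0
        _ ≤ R' * ε := le_refl _
    · simp only []; rw [smul_inv_smul₀ (by positivity)]
  have hSbdd : BddBelow S := ⟨0, fun l hl => hl.1.le⟩
  have hm0 : 0 ≤ mGauge Ω p q := Real.sInf_nonneg fun l hl => hl.1.le
  have hmS : mGauge Ω p q = sInf S := rfl
  rcases eq_or_lt_of_le hm0 with hm | hm
  · -- m = 0 : every point of B is 0
    have hBzero : ∀ x ∈ B, x = (0 : EuclideanSpace ℝ (Fin n)) := by
      intro x hx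
      by_contra hx0
      have hxn : 0 < ‖x‖ := norm_pos_iff.2 hx0
      have hδ : (0:ℝ) < ‖x‖ / R := by positivity
      have : sInf S < ‖x‖ / R := by rw [← hmS, ← hm]; exact hδ
      obtain ⟨l, hlS, hl⟩ := exists_lt_of_csInf_lt hSne this
      obtain ⟨a, ha, hax⟩ := hlS.2 hx
      have han : ‖a‖ < R := by simpa [Metric.mem_ball, dist_zero_right] using hAball ha
      have : ‖x‖ = l * ‖a‖ := by
        rw [← hax]; rw [norm_smul, Real.norm_eq_abs, abs_of_pos hlS.1]
      have h2 : l * ‖a‖ ≤ l * R := mul_le_mul_of_nonneg_left han.le hlS.1.le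
      have h3 : l * R < (‖x‖ / R) * R := mul_lt_mul_of_pos_right hl hR0
      have h4 : (‖x‖ / R) * R = ‖x‖ := div_mul_cancel₀ _ hR0.ne'
      linarith
    intro x hx
    rw [← hm, zero_smul_set ⟨0, h0A⟩]
    simp [hBzero x hx]
  · -- m > 0
    intro x hx
    rcases eq_or_ne x 0 with rfl | hx0
    · exact ⟨0, h0A, smul_zero _⟩
    -- dilate x slightly staying in B
    obtain ⟨δ, hδ0, hδsub⟩ := Metric.isOpen_iff.1 hBopen x hx
    set t : ℝ := 1 + δ / (2 * ‖x‖) with ht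
    have hxn : 0 < ‖x‖ := norm_pos_iff.2 hx0
    have ht1 : 1 < t := by rw [ht]; nlinarith [div_pos hδ0 (by positivity : (0:ℝ) < 2 * ‖x‖)]
    have htx : t • x ∈ B := by
      apply hδsub
      have : dist (t • x) x = (t - 1) * ‖x‖ := by
        rw [dist_eq_norm]
        have h4 : t • x - x = (t - 1) • x := by rw [sub_smul, one_smul]
        rw [h4, norm_smul, Real.norm_eq_abs, abs_of_pos (by linarith)]
      rw [Metric.mem_ball, this, ht]
      have : (1 + δ / (2 * ‖x‖) - 1) * ‖x‖ = δ / 2 := by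
        field_simp; ring
      rw [this]; linarith
    -- pick l ∈ S with l < t * m
    have hlt : sInf S < t * sInf S := by
      rw [← hmS]; nlinarith [hm, ht1]
    obtain ⟨l, hlS, hl⟩ := exists_lt_of_csInf_lt hSne hlt
    obtain ⟨a, ha, hax⟩ := hlS.2 htx
    have hax' : l • a = t • x := hax
    have ht0 : (t:ℝ) ≠ 0 := by linarith
    have hxa : (l / t) • a = x := by
      rw [div_eq_mul_inv, mul_comm, mul_smul, hax', inv_smul_smul₀ ht0]
    have hmem : x ∈ (l / t) • A := ⟨a, ha, hxa⟩
    have hle : l / t ≤ mGauge Ω p q := by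
      rw [hmS, div_le_iff₀ (by linarith : (0:ℝ) < t), mul_comm]
      exact hl.le
    exact smul_subset_smul_of_le' hAconv h0A (div_pos hlS.1 (by linarith)) hle hmem
end

section
/- Let Ω ⊆ ℝⁿ be a nonempty bounded open convex set, p ≠ q points of Ω, and let r be the point where the ray from q through p exits Ω (i.e. r ∈ ∂Ω with p strictly between r and q on the line through p and q). Then m(p,q) = |rq|/|rp|, where m(p,q) = inf{λ > 0 : Ω - q ⊆ λ(Ω - p)}. -/
open Set Pointwise

theorem stmt_8 {n : ℕ} (Ω : Set (EuclideanSpace ℝ (Fin n)))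
    (hne : Ω.Nonempty) (hb : Bornology.IsBounded Ω) (ho : IsOpen Ω)
    (hc : Convex ℝ Ω) (p q r : EuclideanSpace ℝ (Fin n))
    (hp : p ∈ Ω) (hq : q ∈ Ω) (hpq : p ≠ q)
    (hr : r ∈ frontier Ω) (hbtw : Sbtw ℝ r p q) :
    mGauge Ω p q = dist r q / dist r p := by
  obtain ⟨t, ⟨ht0, ht1⟩, hpt⟩ := hbtw.mem_image_Ioo
  rw [AffineMap.lineMap_apply] at hpt
  -- hpt : t • (q -ᵥ r) +ᵥ r = p
  have hpt' : p = t • (q - r) + r := hpt.symm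
  have hrp : r - p = t • (r - q) := by rw [hpt']; module
  have hrq : r ≠ q := hbtw.left_ne_right
  have hdq : dist r q ≠ 0 := dist_ne_zero.mpr hrq
  have hdrp : dist r p = t * dist r q := by
    rw [dist_eq_norm, dist_eq_norm, hrp, norm_smul, Real.norm_eq_abs,
      abs_of_pos ht0]
  rw [ho.frontier_eq] at hr
  obtain ⟨hrc, hrn⟩ := hr
  have hint : Ω = interior Ω := ho.interior_eq.symm
  -- membership of t⁻¹ in the defining set
  have hmem : t⁻¹ ∈ {l : ℝ | 0 < l ∧ (fun x => x - q) '' Ω ⊆ l • ((fun x => x - p) '' Ω)} := by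
    refine ⟨inv_pos.mpr ht0, ?_⟩
    rintro _ ⟨x, hx, rfl⟩
    rw [Set.mem_smul_set]
    refine ⟨(t • x + (1 - t) • r) - p, ⟨t • x + (1 - t) • r, ?_, rfl⟩, ?_⟩
    · rw [hint]
      exact hc.combo_interior_closure_mem_interior (hint ▸ hx) hrc ht0
        (by linarith) (by ring)
    · have h1 : (t • x + (1 - t) • r) - p = t • (x - q) := by rw [hpt']; module
      rw [h1, smul_smul, inv_mul_cancel₀ ht0.ne', one_smul]
  -- lower bound
  have hlb : ∀ l ∈ {l : ℝ | 0 < l ∧ (fun x => x - q) '' Ω ⊆ l • ((fun x => x - p) '' Ω)},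
      t⁻¹ ≤ l := by
    rintro l ⟨hl0, hlsub⟩
    by_contra hlt
    push_neg at hlt
    have hlt1 : l * t < 1 := by
      have := mul_lt_mul_of_pos_right hlt ht0
      rwa [inv_mul_cancel₀ ht0.ne'] at this
    set f : EuclideanSpace ℝ (Fin n) → EuclideanSpace ℝ (Fin n) :=
      fun x => l⁻¹ • (x - q) + p with hf
    have hmaps : Set.MapsTo f Ω Ω := by
      intro x hx
      have hx' : x - q ∈ l • ((fun x => x - p) '' Ω) := hlsub ⟨x, hx, rfl⟩
      rw [Set.mem_smul_set] at hx'
      obtain ⟨_, ⟨y, hy, rfl⟩, hxy⟩ := hx'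
      have : f x = y := by
        simp only [hf, ← hxy, smul_smul, inv_mul_cancel₀ hl0.ne', one_smul]
        abel
      rwa [this]
    have hfc : Continuous f := by
      apply Continuous.add
      · fun_prop
      · exact continuous_const
    have hz : f r ∈ closure Ω := map_mem_closure hfc hrc hmaps
    have hkey : r = (1 - l * t) • p + (l * t) • f r := by
      have h1 : (l * t) • (l⁻¹ • (r - q)) = t • (r - q) := by
        rw [smul_smul]
        congr 1
        field_simp
      have h2 : (1 - l * t) • p + (l * t) • f r
          = p + (l * t) • (l⁻¹ • (r - q)) := by
        simp only [hf]
        module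
      rw [h2, h1, ← hrp]
      abel
    have : r ∈ interior Ω :=
      hkey ▸ hc.combo_interior_closure_mem_interior (hint ▸ hp) hz
        (by nlinarith) (by positivity) (by ring)
    exact hrn (ho.interior_eq ▸ this)
  have hsinf : mGauge Ω p q = t⁻¹ := by
    refine le_antisymm (csInf_le ⟨t⁻¹, hlb⟩ hmem) (le_csInf ⟨t⁻¹, hmem⟩ hlb)
  rw [hsinf, hdrp]
  field_simp
end

section
/- The metric d_Ω(p,q) = log m(p,q) + log m(q,p) on a nonempty bounded open convex set Ω ⊆ ℝⁿ coincides with the Hilbert metric: if r, s are the intersection points of the line through p and q with ∂Ω, ordered as r, p, q, s, then d_Ω(p,q) = log((|rq|·|ps|)/(|rp|·|qs|)) for p ≠ q. -/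
/-!
Put `q = r + μ (p - r)` with `μ = |rq| / |rp| ≥ 1`. Then `Ω - q ⊆ λ (Ω - p)` says that
`x ↦ p + λ⁻¹ (x - q)` maps `Ω` into itself. For `λ = μ` this map is the homothety of ratio `μ⁻¹`
centred at `r ∈ closure Ω`, which preserves the open convex set `Ω`. For `λ < μ`, points of `Ω`
close to `r` are sent beyond `r` on the ray from `p`, which leaves `Ω` since `r ∉ Ω`. Hence
`m(p, q) = |rq| / |rp|`, symmetrically `m(q, p) = |ps| / |qs|`, and the logarithms add up to the
Hilbert distance.
-/

open Set Pointwise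

open AffineMap

def containmentRatios {V : Type*} [AddCommGroup V] [Module ℝ V] (Ω : Set V) (p q : V) :
    Set ℝ :=
  {l : ℝ | 0 < l ∧ (· - q) '' Ω ⊆ l • (· - p) '' Ω}

theorem mGauge_eq_sInf_containmentRatios {n : ℕ} (Ω : Set (EuclideanSpace ℝ (Fin n)))
    (p q : EuclideanSpace ℝ (Fin n)) : mGauge Ω p q = sInf (containmentRatios Ω p q) :=
  rfl

theorem sub_image_subset_smul_sub_image_iff {V : Type*} [AddCommGroup V] [Module ℝ V]
    {Ω : Set V} {p q : V} {l : ℝ} (hl : l ≠ 0) :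
    (· - q) '' Ω ⊆ l • (· - p) '' Ω ↔ ∀ x ∈ Ω, p + l⁻¹ • (x - q) ∈ Ω := by
  constructor
  · rintro h x hx
    obtain ⟨_, ⟨y, hy, rfl⟩, hyx⟩ := h ⟨x, hx, rfl⟩
    convert hy using 1
    simp only at hyx
    rw [← hyx, smul_smul, inv_mul_cancel₀ hl, one_smul, add_sub_cancel]
  · rintro h _ ⟨x, hx, rfl⟩
    refine ⟨_, ⟨_, h x hx, rfl⟩, ?_⟩
    simp only
    rw [add_sub_cancel_left, smul_smul, mul_inv_cancel₀ hl, one_smul]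

section Gauge

variable {E : Type*} [AddCommGroup E] [Module ℝ E] [TopologicalSpace E] {Ω : Set E} {p r : E}

theorem IsOpen.lineMap_notMem_of_neg (ho : IsOpen Ω) (hc : Convex ℝ Ω)
    (hr : r ∈ frontier Ω) (hp : p ∈ Ω) {c : ℝ} (hc0 : c < 0) : lineMap r p c ∉ Ω := by
  intro hy
  have hc1 : 0 < 1 - c := by linarith
  apply (ho.frontier_eq ▸ hr).2
  -- `r` lies on the segment from `lineMap r p c` to `p`
  convert hc hy hp (a := 1 / (1 - c)) (b := -c / (1 - c)) (by positivity)
    (div_nonneg (by linarith) hc1.le) (by field_simp; ring) using 1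
  rw [lineMap_apply_module']
  match_scalars <;> field_simp <;> ring

variable [IsTopologicalAddGroup E] [ContinuousSMul ℝ E]

theorem IsOpen.mem_containmentRatios_lineMap (ho : IsOpen Ω) (hc : Convex ℝ Ω)
    (hr : r ∈ frontier Ω) {μ : ℝ} (hμ : 1 ≤ μ) :
    μ ∈ containmentRatios Ω p (lineMap r p μ) := by
  have hμ0 : 0 < μ := by linarith
  refine ⟨hμ0, (sub_image_subset_smul_sub_image_iff hμ0.ne').2 fun x hx => ?_⟩
  have : (1 - μ⁻¹) • r + μ⁻¹ • x ∈ interior Ω :=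
    hc.combo_closure_interior_mem_interior hr.1 (by rwa [ho.interior_eq])
      (sub_nonneg.2 (inv_le_one_of_one_le₀ hμ)) (inv_pos.2 hμ0) (by ring)
  convert interior_subset this using 1
  rw [lineMap_apply_module']
  match_scalars <;> field_simp <;> ring

theorem IsOpen.le_of_mem_containmentRatios_lineMap (ho : IsOpen Ω) (hc : Convex ℝ Ω)
    (hp : p ∈ Ω) (hr : r ∈ frontier Ω) {μ l : ℝ}
    (hl : l ∈ containmentRatios Ω p (lineMap r p μ)) : μ ≤ l := by
  obtain ⟨hl0, hincl⟩ := hl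
  by_contra! hlμ
  set ε := min 1 ((μ - l) / 2)
  have hε0 : 0 < ε := lt_min one_pos (by linarith)
  have hxΩ : lineMap r p ε ∈ Ω := by
    rw [lineMap_apply_module, ← ho.interior_eq]
    exact hc.combo_closure_interior_mem_interior hr.1 (by rwa [ho.interior_eq])
      (sub_nonneg.2 (min_le_left _ _)) hε0 (by ring)
  have hneg : 1 + l⁻¹ * (ε - μ) < 0 := by
    have : ε - μ < -l := by linarith [min_le_right 1 ((μ - l) / 2)]
    calc 1 + l⁻¹ * (ε - μ) < 1 + l⁻¹ * -l := by gcongr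
      _ = 0 := by field_simp; ring
  apply ho.lineMap_notMem_of_neg hc hr hp hneg
  convert (sub_image_subset_smul_sub_image_iff hl0.ne').1 hincl _ hxΩ using 1
  simp only [lineMap_apply_module']
  match_scalars <;> field_simp
  ring

theorem IsOpen.sInf_containmentRatios_lineMap (ho : IsOpen Ω) (hc : Convex ℝ Ω)
    (hp : p ∈ Ω) (hr : r ∈ frontier Ω) {μ : ℝ} (hμ : 1 ≤ μ) :
    sInf (containmentRatios Ω p (lineMap r p μ)) = μ :=
  have hmem := ho.mem_containmentRatios_lineMap hc hr hμ
  have hlb : ∀ l ∈ containmentRatios Ω p (lineMap r p μ), μ ≤ l :=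
    fun _ => ho.le_of_mem_containmentRatios_lineMap hc hp hr
  le_antisymm (csInf_le ⟨μ, hlb⟩ hmem) (le_csInf ⟨μ, hmem⟩ hlb)

end Gauge

theorem Sbtw.eq_lineMap_dist_div {E : Type*} [NormedAddCommGroup E] [NormedSpace ℝ E]
    {r p q : E} (h : Sbtw ℝ r p q) :
    q = lineMap r p (dist r q / dist r p) ∧ 1 ≤ dist r q / dist r p := by
  obtain ⟨t, ⟨ht0, ht1⟩, rfl⟩ := h.mem_image_Ioo
  have hrq : dist r q ≠ 0 := dist_ne_zero.2 h.left_ne_right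
  rw [dist_left_lineMap, Real.norm_of_nonneg ht0.le, div_mul_cancel_right₀ hrq]
  refine ⟨?_, one_le_inv₀ ht0 |>.2 ht1.le⟩
  simp only [lineMap_apply_module']
  match_scalars <;> field_simp
  ring

theorem mGauge_eq_dist_div {n : ℕ} {Ω : Set (EuclideanSpace ℝ (Fin n))} (ho : IsOpen Ω)
    (hc : Convex ℝ Ω) {p q r : EuclideanSpace ℝ (Fin n)} (hp : p ∈ Ω)
    (hr : r ∈ frontier Ω) (h : Sbtw ℝ r p q) :
    mGauge Ω p q = dist r q / dist r p := by
  obtain ⟨hq, hμ⟩ := h.eq_lineMap_dist_div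
  rw [mGauge_eq_sInf_containmentRatios]
  conv_lhs => rw [hq]
  exact ho.sInf_containmentRatios_lineMap hc hp hr hμ

theorem stmt_10_general {n : ℕ} (Ω : Set (EuclideanSpace ℝ (Fin n)))
    (ho : IsOpen Ω)
    (hc : Convex ℝ Ω) (p q r s : EuclideanSpace ℝ (Fin n))
    (hp : p ∈ Ω) (hq : q ∈ Ω)
    (hr : r ∈ frontier Ω) (hs : s ∈ frontier Ω)
    (h1 : Sbtw ℝ r p q) (h2 : Sbtw ℝ p q s) :
    Real.log (mGauge Ω p q) + Real.log (mGauge Ω q p) =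
      Real.log ((dist r q * dist p s) / (dist r p * dist q s)) := by
  rw [mGauge_eq_dist_div ho hc hp hr h1, mGauge_eq_dist_div ho hc hq hs h2.symm,
    ← Real.log_mul, dist_comm s p, dist_comm s q, mul_div_mul_comm]
  exacts [div_ne_zero (dist_ne_zero.2 h1.left_ne_right) (dist_ne_zero.2 h1.left_ne),
    div_ne_zero (dist_ne_zero.2 h2.left_ne_right.symm) (dist_ne_zero.2 h2.ne_right.symm)]

theorem stmt_10 {n : ℕ} (Ω : Set (EuclideanSpace ℝ (Fin n)))
    (hne : Ω.Nonempty) (hb : Bornology.IsBounded Ω) (ho : IsOpen Ω)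
    (hc : Convex ℝ Ω) (p q r s : EuclideanSpace ℝ (Fin n))
    (hp : p ∈ Ω) (hq : q ∈ Ω) (hpq : p ≠ q)
    (hr : r ∈ frontier Ω) (hs : s ∈ frontier Ω)
    (h1 : Sbtw ℝ r p q) (h2 : Sbtw ℝ p q s) :
    Real.log (mGauge Ω p q) + Real.log (mGauge Ω q p) =
      Real.log ((dist r q * dist p s) / (dist r p * dist q s)) :=
  stmt_10_general Ω ho hc p q r s hp hq hr hs h1 h2
end

section
/- Let w(x) = √((1-|x|²)/2) on the open unit disk D ⊆ ℝ² and let d_H denote the Hilbert metric of D, which is given by d_H(x,y) = 2log(1 - x·y + √(|y-x|² - |x∧y|²)) − log((1-|x|²)(1-|y|²)). Then |log w(x) − log w(y)| ≤ (1/2) d_H(x,y) for all x, y ∈ D. -/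
open Set

noncomputable def wDisk (x : EuclideanSpace ℝ (Fin 2)) : ℝ :=
  Real.sqrt ((1 - ‖x‖ ^ 2) / 2)

noncomputable def hilbertDisk (x y : EuclideanSpace ℝ (Fin 2)) : ℝ :=
  2 * Real.log (1 - (inner ℝ x y : ℝ) +
      Real.sqrt (‖y - x‖ ^ 2 - (x 0 * y 1 - x 1 * y 0) ^ 2)) -
    Real.log ((1 - ‖x‖ ^ 2) * (1 - ‖y‖ ^ 2))

/-!
Writing `a = 1 - |x|²`, `b = 1 - |y|²` and `S` for the argument of the first logarithm in
`hilbertDisk`, the inequality says `|log a - log b| ≤ 2 log S - log a - log b`, i.e. `a ≤ S` and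
`b ≤ S`. By Lagrange's identity the radicand in `S` is `(1 - x·y)² - a b`, and this exceeds
`(x·y - |x|²)²` by `(1 - |x|²) |x - y|² ≥ 0`; hence `S ≥ 1 - x·y + (x·y - |x|²) = a`.
-/

theorem inner_sq_add_cross_sq (x y : EuclideanSpace ℝ (Fin 2)) :
    inner ℝ x y ^ 2 + (x 0 * y 1 - x 1 * y 0) ^ 2 = ‖x‖ ^ 2 * ‖y‖ ^ 2 := by
  simp only [EuclideanSpace.real_norm_sq_eq, EuclideanSpace.inner_eq_star_dotProduct,
    dotProduct, Fin.sum_univ_two, star_trivial]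
  ring

theorem norm_sub_sq_sub_cross_sq (x y : EuclideanSpace ℝ (Fin 2)) :
    ‖y - x‖ ^ 2 - (x 0 * y 1 - x 1 * y 0) ^ 2 =
      (1 - inner ℝ x y) ^ 2 - (1 - ‖x‖ ^ 2) * (1 - ‖y‖ ^ 2) := by
  have lagrange := inner_sq_add_cross_sq x y
  rw [norm_sub_sq_real, real_inner_comm]
  linear_combination -lagrange

theorem one_sub_le_one_sub_add_sqrt {X Y p : ℝ} (hX : X ≤ 1) (hp : 2 * p ≤ X + Y) :
    1 - X ≤ 1 - p + √((1 - p) ^ 2 - (1 - X) * (1 - Y)) := by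
  have excess : (1 - p) ^ 2 - (1 - X) * (1 - Y) - (p - X) ^ 2 = (1 - X) * (X + Y - 2 * p) := by
    ring
  have hsqrt : |p - X| ≤ √((1 - p) ^ 2 - (1 - X) * (1 - Y)) :=
    Real.abs_le_sqrt (by nlinarith [mul_nonneg (sub_nonneg.2 hX) (sub_nonneg.2 hp)])
  linarith [le_abs_self (p - X)]

theorem abs_log_sub_log_le {a b S : ℝ} (ha : 0 < a) (hb : 0 < b) (haS : a ≤ S) (hbS : b ≤ S) :
    |Real.log a - Real.log b| ≤ 2 * Real.log S - Real.log (a * b) := by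
  rw [Real.log_mul ha.ne' hb.ne', abs_le]
  constructor <;> linarith [Real.log_le_log ha haS, Real.log_le_log hb hbS]

theorem one_sub_norm_sq_pos {E : Type*} [SeminormedAddCommGroup E] {x : E} (hx : ‖x‖ < 1) :
    0 < 1 - ‖x‖ ^ 2 :=
  sub_pos.2 (pow_lt_one₀ (norm_nonneg x) hx two_ne_zero)

theorem log_wDisk {x : EuclideanSpace ℝ (Fin 2)} (hx : ‖x‖ < 1) :
    Real.log (wDisk x) = (Real.log (1 - ‖x‖ ^ 2) - Real.log 2) / 2 := by
  have hpos := one_sub_norm_sq_pos hx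
  rw [wDisk, Real.log_sqrt (by positivity), Real.log_div hpos.ne' two_ne_zero]

theorem stmt_14 (x y : EuclideanSpace ℝ (Fin 2)) (hx : ‖x‖ < 1) (hy : ‖y‖ < 1) :
    |Real.log (wDisk x) - Real.log (wDisk y)| ≤ (1 / 2) * hilbertDisk x y := by
  have ha := one_sub_norm_sq_pos hx
  have hb := one_sub_norm_sq_pos hy
  have hp : 2 * inner ℝ x y ≤ ‖x‖ ^ 2 + ‖y‖ ^ 2 := by
    linarith [norm_sub_sq_real x y, sq_nonneg ‖x - y‖]
  have haS : 1 - ‖x‖ ^ 2 ≤ 1 - inner ℝ x y +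
      √(‖y - x‖ ^ 2 - (x 0 * y 1 - x 1 * y 0) ^ 2) := by
    rw [norm_sub_sq_sub_cross_sq]
    exact one_sub_le_one_sub_add_sqrt (by linarith) hp
  have hbS : 1 - ‖y‖ ^ 2 ≤ 1 - inner ℝ x y +
      √(‖y - x‖ ^ 2 - (x 0 * y 1 - x 1 * y 0) ^ 2) := by
    rw [norm_sub_sq_sub_cross_sq, mul_comm (1 - ‖x‖ ^ 2)]
    exact one_sub_le_one_sub_add_sqrt (by linarith) (by linarith)
  have key := abs_log_sub_log_le ha hb haS hbS
  rw [abs_le] at key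
  rw [log_wDisk hx, log_wDisk hy, hilbertDisk, abs_le]
  constructor <;> linarith [key.1, key.2]
end

section
/- Let a: [0,∞) → ℝ be smooth with a(r) > 0 and a(r) + r a′(r) > 0 for all r ≥ 0, and let d ≥ 1. There exists ε ∈ (0,1) such that Z(x) = (ε/2)(1 − |x|²) satisfies the differential inequality div(a(|∇Z|)∇Z) + F(|∇Z|)/Z ≥ 0 on the open unit ball B(0,1) ⊆ ℝ^d, where F is smooth, nonnegative, and F(0) > 0. -/
open Set Metric

noncomputable def divg {d : ℕ}
    (V : EuclideanSpace ℝ (Fin d) → EuclideanSpace ℝ (Fin d))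
    (x : EuclideanSpace ℝ (Fin d)) : ℝ :=
  ∑ i, fderiv ℝ (fun y => V y i) x (EuclideanSpace.single i 1)

section auxLemmas

open InnerProductSpace

variable {E : Type*} [NormedAddCommGroup E] [InnerProductSpace ℝ E] [CompleteSpace E]

set_option linter.unusedSectionVars false

lemma aux_grad (c : ℝ) (y : E) : HasGradientAt (fun z : E => c * (1 - ‖z‖^2)) ((-(2*c)) • y) y := by
  rw [hasGradientAt_iff_hasFDerivAt]
  have h1 : HasFDerivAt (fun z : E => ‖z‖^2)
      ((fderivInnerCLM ℝ (y, y)).comp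
        ((ContinuousLinearMap.id ℝ E).prod (ContinuousLinearMap.id ℝ E))) y := by
    have := (hasFDerivAt_id y).inner ℝ (hasFDerivAt_id y)
    simpa only [id_eq, real_inner_self_eq_norm_sq] using this
  have h2 := (h1.const_sub 1).const_mul c
  refine h2.congr_fderiv ?_
  ext h
  simp [real_inner_smul_left, real_inner_comm]
  ring

lemma aux_norm_fderiv {x : E} (hx : x ≠ 0) :
    HasFDerivAt (fun y : E => ‖y‖) (‖x‖⁻¹ • (innerSL ℝ x)) x := by
  have hx' : (0:ℝ) < ‖x‖ := norm_pos_iff.2 hx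
  have h1 := (hasStrictFDerivAt_norm_sq x).hasFDerivAt
  have hs : HasDerivAt Real.sqrt (1/(2*Real.sqrt (‖x‖^2))) (‖x‖^2) :=
    Real.hasDerivAt_sqrt (by positivity)
  have h2 := hs.comp_hasFDerivAt x h1
  have h3 : (fun y : E => Real.sqrt (‖y‖^2)) = fun y : E => ‖y‖ := by
    funext y; exact Real.sqrt_sq (norm_nonneg y)
  rw [Function.comp_def, h3] at h2
  refine h2.congr_fderiv ?_
  ext h
  rw [Real.sqrt_sq (norm_nonneg x)]
  simp
  field_simp

lemma aux_acomp (a : ℝ → ℝ) (ha : ContDiff ℝ (⊤ : ℕ∞) a) (ε : ℝ) {x : E} (hx : x ≠ 0) :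
    HasFDerivAt (fun y : E => a (ε * ‖y‖))
      ((deriv a (ε * ‖x‖) * (ε * ‖x‖⁻¹)) • (innerSL ℝ x)) x := by
  have hd : HasDerivAt a (deriv a (ε * ‖x‖)) (ε * ‖x‖) :=
    (ha.differentiable (by simp) (ε * ‖x‖)).hasDerivAt
  have hn : HasFDerivAt (fun y : E => ε * ‖y‖) (ε • (‖x‖⁻¹ • (innerSL ℝ x))) x :=
    (aux_norm_fderiv hx).const_mul ε
  have h2 := hd.comp_hasFDerivAt x hn
  refine h2.congr_fderiv ?_
  ext h
  simp
  ring

lemma aux_zero (a : ℝ → ℝ) (ha : ContDiff ℝ (⊤ : ℕ∞) a) (ε : ℝ) (φ : E →L[ℝ] ℝ) :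
    HasFDerivAt (fun y : E => a (ε * ‖y‖) * φ y) ((a (ε * 0) * 1) • φ) (0 : E) := by
  have key : HasFDerivAt (fun y : E => (a (ε * ‖y‖) - a 0) * φ y) (0 : E →L[ℝ] ℝ) (0 : E) := by
    rw [hasFDerivAt_iff_isLittleO_nhds_zero]
    have h1 : (fun h : E => a (ε * ‖h‖) - a 0) =o[nhds (0:E)] (fun _ => (1:ℝ)) := by
      rw [Asymptotics.isLittleO_one_iff]
      have : Filter.Tendsto (fun h : E => a (ε * ‖h‖)) (nhds 0) (nhds (a (ε * ‖(0:E)‖))) :=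
        ((ha.continuous.comp (continuous_const.mul continuous_norm)).tendsto (0:E))
      simpa using this.sub_const (a 0)
    have h2 : (fun h : E => φ h) =O[nhds (0:E)] (fun h : E => h) := φ.isBigO_id _
    have h3 := h1.mul_isBigO (h2.norm_right)
    simp only [one_mul] at h3
    have := h3.trans_isBigO ((Asymptotics.isBigO_refl (fun h : E => h) _).norm_left)
    simpa using this
  have hlin : HasFDerivAt (fun y : E => a 0 * φ y) ((a 0) • φ) (0 : E) :=
    (φ.hasFDerivAt).const_mul (a 0)
  have := key.add hlin
  simp only [zero_add] at this
  refine (this.congr_of_eventuallyEq ?_).congr_fderiv ?_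
  · exact Filter.Eventually.of_forall (fun y => by simp only [Pi.add_apply]; ring)
  · simp

end auxLemmas

lemma divg_formula {d : ℕ} (a : ℝ → ℝ) (ha : ContDiff ℝ (⊤ : ℕ∞) a) (ε : ℝ)
    (x : EuclideanSpace ℝ (Fin d)) :
    divg (fun y => a (ε * ‖y‖) • ((-ε) • y)) x
      = -(ε * (d * a (ε * ‖x‖) + (ε * ‖x‖) * deriv a (ε * ‖x‖))) := by
  have hcoord : ∀ i : Fin d, (fun y : EuclideanSpace ℝ (Fin d) => (a (ε * ‖y‖) • ((-ε) • y)) i)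
      = fun y : EuclideanSpace ℝ (Fin d) =>
          a (ε * ‖y‖) * (((-ε) • (EuclideanSpace.proj i : EuclideanSpace ℝ (Fin d) →L[ℝ] ℝ)) y) := by
    intro i; funext y
    simp [EuclideanSpace.proj, PiLp.smul_apply, smul_eq_mul]
    try ring
  rw [divg]
  rcases eq_or_ne x 0 with rfl | hx
  · have key : ∀ i : Fin d,
        fderiv ℝ (fun y : EuclideanSpace ℝ (Fin d) => (a (ε * ‖y‖) • ((-ε) • y)) i)
          (0 : EuclideanSpace ℝ (Fin d)) (EuclideanSpace.single i 1) = a 0 * (-ε) := by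
      intro i
      rw [hcoord i,
        (aux_zero a ha ε ((-ε) • (EuclideanSpace.proj i : EuclideanSpace ℝ (Fin d) →L[ℝ] ℝ))).fderiv]
      simp [EuclideanSpace.proj, EuclideanSpace.single_apply]
    rw [Finset.sum_congr rfl (fun i _ => key i)]
    simp [Finset.sum_const]
    ring
  · have hxn : (0:ℝ) < ‖x‖ := norm_pos_iff.2 hx
    have hG := aux_acomp a ha ε hx
    have key : ∀ i : Fin d,
        fderiv ℝ (fun y : EuclideanSpace ℝ (Fin d) => (a (ε * ‖y‖) • ((-ε) • y)) i)
          x (EuclideanSpace.single i 1)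
        = a (ε * ‖x‖) * (-ε) + (-ε * x i) * ((deriv a (ε * ‖x‖) * (ε * ‖x‖⁻¹)) * x i) := by
      intro i
      have hφ := (((-ε) • (EuclideanSpace.proj i : EuclideanSpace ℝ (Fin d) →L[ℝ] ℝ))).hasFDerivAt (x := x)
      have hmul : HasFDerivAt (fun y : EuclideanSpace ℝ (Fin d) => a (ε * ‖y‖) * (((-ε) • (EuclideanSpace.proj i : EuclideanSpace ℝ (Fin d) →L[ℝ] ℝ)) y)) _ x := hG.mul hφ
      rw [hcoord i, hmul.fderiv]
      simp [EuclideanSpace.proj, EuclideanSpace.single_apply, real_inner_comm, EuclideanSpace.inner_single_right]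
    rw [Finset.sum_congr rfl (fun i _ => key i)]
    rw [Finset.sum_add_distrib, Finset.sum_const]
    have hsum : ∑ i, (-ε * x i) * ((deriv a (ε * ‖x‖) * (ε * ‖x‖⁻¹)) * x i)
        = (-ε * (deriv a (ε * ‖x‖) * (ε * ‖x‖⁻¹))) * ∑ i, x i * x i := by
      rw [Finset.mul_sum]
      exact Finset.sum_congr rfl (fun i _ => by ring)
    have hns : ∑ i, x i * x i = ‖x‖^2 := by
      rw [← real_inner_self_eq_norm_sq x, PiLp.inner_apply]
      simp [RCLike.inner_apply]
      exact Finset.sum_congr rfl (fun i _ => (sq _).symm)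
    rw [hsum, hns]
    have hinv : ‖x‖⁻¹ * ‖x‖^2 = ‖x‖ := by
      rw [sq]; field_simp
    simp only [nsmul_eq_mul, Finset.card_univ, Fintype.card_fin]
    have : (-ε * (deriv a (ε * ‖x‖) * (ε * ‖x‖⁻¹))) * ‖x‖^2
        = -(ε * ((ε * ‖x‖) * deriv a (ε * ‖x‖))) := by
      field_simp
    rw [this]
    ring

theorem stmt_15 {d : ℕ} (hd : 1 ≤ d) (a F : ℝ → ℝ)
    (ha_smooth : ContDiff ℝ (⊤ : ℕ∞) a)
    (ha : ∀ r : ℝ, 0 ≤ r → 0 < a r ∧ 0 < a r + r * deriv a r)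
    (hF_smooth : ContDiff ℝ (⊤ : ℕ∞) F) (hF_nonneg : ∀ r : ℝ, 0 ≤ r → 0 ≤ F r)
    (hF0 : 0 < F 0) :
    ∃ ε ∈ Ioo (0:ℝ) 1,
      ∀ x ∈ ball (0 : EuclideanSpace ℝ (Fin d)) 1,
        0 ≤ divg (fun y =>
              a ‖gradient (fun z => ε / 2 * (1 - ‖z‖ ^ 2)) y‖ •
                gradient (fun z : EuclideanSpace ℝ (Fin d) => ε / 2 * (1 - ‖z‖ ^ 2)) y) x
          + F ‖gradient (fun z : EuclideanSpace ℝ (Fin d) => ε / 2 * (1 - ‖z‖ ^ 2)) x‖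
              / (ε / 2 * (1 - ‖x‖ ^ 2)) := by
  -- continuity facts
  have hda : Continuous (deriv a) := ha_smooth.continuous_deriv (by simp)
  set G : ℝ → ℝ := fun t => d * a t + t * deriv a t with hGdef
  have hGc : Continuous G := by
    exact (continuous_const.mul ha_smooth.continuous).add (continuous_id.mul hda)
  obtain ⟨C, hC⟩ := isCompact_Icc.exists_bound_of_continuousOn (s := Icc (0:ℝ) 1)
    hGc.continuousOn
  set C' : ℝ := C + 1 with hC'def
  have hC'pos : 0 < C' := by
    have := hC 0 (by constructor <;> norm_num)
    have := norm_nonneg (G 0)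
    simp only [hC'def]; linarith
  -- δ from continuity of F at 0
  have hFev : ∀ᶠ t in nhds (0:ℝ), F 0 / 2 < F t :=
    (hF_smooth.continuous.tendsto 0).eventually (eventually_gt_nhds (by linarith))
  obtain ⟨δ, hδpos, hδ⟩ := Metric.eventually_nhds_iff.mp hFev
  -- choose ε
  set ε : ℝ := min (δ/2) (min (1/2) (Real.sqrt (F 0 / C'))) with hεdef
  have hsqrtpos : 0 < Real.sqrt (F 0 / C') := Real.sqrt_pos.mpr (by positivity)
  have hε0 : 0 < ε := by
    apply lt_min (by positivity) (lt_min (by norm_num) hsqrtpos)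
  have hεhalf : ε ≤ 1/2 := le_trans (min_le_right _ _) (min_le_left _ _)
  have hε1 : ε < 1 := lt_of_le_of_lt hεhalf (by norm_num)
  have hεδ : ε < δ := lt_of_le_of_lt (min_le_left _ _) (by linarith)
  have hε2 : ε^2 ≤ F 0 / C' := by
    have h1 : ε ≤ Real.sqrt (F 0 / C') := le_trans (min_le_right _ _) (min_le_right _ _)
    calc ε^2 ≤ (Real.sqrt (F 0 / C'))^2 := by
          exact pow_le_pow_left₀ (le_of_lt hε0) h1 2
      _ = F 0 / C' := Real.sq_sqrt (by positivity)
  refine ⟨ε, ⟨hε0, hε1⟩, ?_⟩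
  intro x hx
  rw [mem_ball, dist_zero_right] at hx
  -- rewrite gradient
  have hgrad : ∀ y : EuclideanSpace ℝ (Fin d),
      gradient (fun z : EuclideanSpace ℝ (Fin d) => ε / 2 * (1 - ‖z‖ ^ 2)) y = (-ε) • y := by
    intro y
    rw [(aux_grad (ε/2) y).gradient]
    congr 1
    ring
  have hnormgrad : ∀ y : EuclideanSpace ℝ (Fin d), ‖(-ε) • y‖ = ε * ‖y‖ := by
    intro y
    rw [norm_smul, Real.norm_eq_abs, abs_neg, abs_of_pos hε0]
  have hV : (fun y : EuclideanSpace ℝ (Fin d) =>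
        a ‖gradient (fun z : EuclideanSpace ℝ (Fin d) => ε / 2 * (1 - ‖z‖ ^ 2)) y‖ •
          gradient (fun z : EuclideanSpace ℝ (Fin d) => ε / 2 * (1 - ‖z‖ ^ 2)) y)
      = fun y : EuclideanSpace ℝ (Fin d) => a (ε * ‖y‖) • ((-ε) • y) := by
    funext y
    rw [hgrad y, hnormgrad y]
  rw [hV, divg_formula a ha_smooth ε x, hgrad x, hnormgrad x]
  -- now a pointwise real inequality
  set t : ℝ := ε * ‖x‖ with htdef
  have ht0 : 0 ≤ t := by positivity
  have htε : t ≤ ε := by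
    calc t = ε * ‖x‖ := rfl
      _ ≤ ε * 1 := by
          exact mul_le_mul_of_nonneg_left (le_of_lt hx) (le_of_lt hε0)
      _ = ε := mul_one ε
  have htδ : dist t 0 < δ := by
    rw [Real.dist_eq, sub_zero, abs_of_nonneg ht0]
    exact lt_of_le_of_lt htε hεδ
  have hFt : F 0 / 2 < F t := hδ htδ
  have hZ0 : 0 < ε / 2 * (1 - ‖x‖ ^ 2) := by
    have h1 : ‖x‖ ^ 2 < 1 := by
      have := norm_nonneg x
      nlinarith
    have : (0:ℝ) < 1 - ‖x‖ ^ 2 := by linarith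
    positivity
  have hZle : ε / 2 * (1 - ‖x‖ ^ 2) ≤ ε / 2 := by
    have h2 : 1 - ‖x‖ ^ 2 ≤ 1 := by
      have := sq_nonneg ‖x‖
      linarith
    nlinarith
  have hGt0 : 0 ≤ G t := by
    obtain ⟨h1, h2⟩ := ha t ht0
    have hd1 : (1:ℝ) ≤ (d:ℝ) := by exact_mod_cast hd
    have : (d:ℝ) * a t ≥ 1 * a t := by
      exact mul_le_mul_of_nonneg_right hd1 (le_of_lt h1)
    simp only [hGdef]
    nlinarith
  have hGtC : G t ≤ C' := by
    have h1 : t ∈ Icc (0:ℝ) 1 := ⟨ht0, le_trans htε (by linarith)⟩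
    have := hC t h1
    have := le_abs_self (G t)
    rw [Real.norm_eq_abs] at *
    simp only [hC'def]
    linarith [hC t h1]
  -- final inequality
  have hdivG : (d : ℝ) * a t + t * deriv a t = G t := rfl
  rw [hdivG]
  have key : ε * G t * (ε / 2 * (1 - ‖x‖ ^ 2)) ≤ F t := by
    have h1 : ε * G t * (ε / 2 * (1 - ‖x‖ ^ 2)) ≤ ε * G t * (ε / 2) := by
      apply mul_le_mul_of_nonneg_left hZle (by positivity)
    have h2 : ε * G t * (ε / 2) = ε^2 / 2 * G t := by ring
    have h3 : ε^2 / 2 * G t ≤ (F 0 / C') / 2 * C' := by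
      apply mul_le_mul (by linarith) hGtC hGt0 (by positivity)
    have h4 : (F 0 / C') / 2 * C' = F 0 / 2 := by
      field_simp
    linarith
  have : ε * G t ≤ F t / (ε / 2 * (1 - ‖x‖ ^ 2)) := by
    rw [le_div_iff₀ hZ0]
    exact key
  linarith
end
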